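/- arXiv:1205.3676 — 4 statements merged into one kernel-verified Lean document; each statement's English description precedes it below -/
import Mathlib

section
/- Consider a time-varying digraph D[t] = (V, E[t]) in which each normal node updates its value according to discrete-time ARC-P with parameter F, and suppose the set of malicious adversary nodes is F-locally bounded. If there exists t0 ≥ 0 such that D[t] is (2F+1)-robust for all t ≥ t0, then the normal nodes achieve resilient asymptotic consensus: there exists L ∈ ℝ with lim_{t→∞} x_i[t] = L for every normal node i, and x_i[t] ∈ [m[0], M[0]] for all t and all normal i. -/
/-- The in-neighbors of node `i` in the digraph with edge set `E`:
`V_i = {j : (j, i) ∈ E}`. -/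
def inNbrs {V : Type*} [Fintype V] [DecidableEq V] (E : Finset (V × V)) (i : V) : Finset V :=
  Finset.univ.filter (fun j => (j, i) ∈ E)

/-- `X_S = {i ∈ S : |V_i \ S| ≥ r}`, the set of nodes of `S` with at least `r`
in-neighbors outside of `S`. -/
def reachSet {V : Type*} [Fintype V] [DecidableEq V] (E : Finset (V × V)) (r : ℕ)
    (S : Finset V) : Finset V :=
  S.filter (fun i => r ≤ ((inNbrs E i) \ S).card)

/-- `(r,s)`-robustness of the digraph with edge set `E`. -/
def RSRobust {V : Type*} [Fintype V] [DecidableEq V] (E : Finset (V × V)) (r s : ℕ) : Prop :=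
  ∀ S1 S2 : Finset V, S1.Nonempty → S2.Nonempty → Disjoint S1 S2 →
    (reachSet E r S1).card = S1.card ∨ (reachSet E r S2).card = S2.card ∨
    s ≤ (reachSet E r S1).card + (reachSet E r S2).card

/-- A nonempty set `S` is `r`-reachable if some node of `S` has at least `r`
in-neighbors outside of `S`. -/
def rReachable {V : Type*} [Fintype V] [DecidableEq V] (E : Finset (V × V)) (r : ℕ)
    (S : Finset V) : Prop :=
  ∃ i ∈ S, r ≤ ((inNbrs E i) \ S).card

/-- A digraph is `r`-robust if for every pair of nonempty, disjoint subsets of nodes,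
at least one of the two subsets is `r`-reachable. -/
def rRobust {V : Type*} [Fintype V] [DecidableEq V] (E : Finset (V × V)) (r : ℕ) : Prop :=
  ∀ S1 S2 : Finset V, S1.Nonempty → S2.Nonempty → Disjoint S1 S2 →
    rReachable E r S1 ∨ rReachable E r S2

/-- `R` is a valid ARC-P removed set with parameter `F` for a node `i` with
in-neighbor set `Vi` and current values `xt` : it is the union of a set `Ra` of
removed larger values and a set `Rb` of removed smaller values.  If fewer than
(or exactly) `F` in-neighbors have values strictly larger than `xt i`, then all
of them are removed; otherwise exactly `F` in-neighbors carrying the largest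
values are removed (ties broken arbitrarily/deterministically).  Likewise for
the strictly smaller values. -/
def ValidRemoved {V : Type*} [DecidableEq V] (Vi : Finset V) (xt : V → ℝ) (i : V) (F : ℕ)
    (R : Finset V) : Prop :=
  ∃ Ra Rb : Finset V,
    R = Ra ∪ Rb ∧
    Ra ⊆ Vi.filter (fun j => xt i < xt j) ∧
    ((Ra = Vi.filter (fun j => xt i < xt j) ∧ Ra.card ≤ F) ∨
      (Ra.card = F ∧ ∀ j ∈ Ra, ∀ k ∈ (Vi.filter (fun j => xt i < xt j)) \ Ra, xt k ≤ xt j)) ∧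
    Rb ⊆ Vi.filter (fun j => xt j < xt i) ∧
    ((Rb = Vi.filter (fun j => xt j < xt i) ∧ Rb.card ≤ F) ∨
      (Rb.card = F ∧ ∀ j ∈ Rb, ∀ k ∈ (Vi.filter (fun j => xt j < xt i)) \ Rb, xt j ≤ xt k))

/-- Node `i` performs the discrete-time ARC-P update with parameter `F` at time `t`
on the digraph with edge set `E`: the removed set `R t i` is valid, the weights on the
kept inclusive neighbors are at least `α` and sum to `1`, and the new value is the
corresponding weighted average of the kept values. -/
def ArcpUpdate {V : Type*} [Fintype V] [DecidableEq V] (E : Finset (V × V)) (F : ℕ) (α : ℝ)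
    (x : ℕ → V → ℝ) (R : ℕ → V → Finset V) (w : ℕ → V → V → ℝ) (i : V) (t : ℕ) : Prop :=
  ValidRemoved (inNbrs E i) (x t) i F (R t i) ∧
  (∀ j ∈ (insert i (inNbrs E i)) \ R t i, α ≤ w t i j) ∧
  (∑ j ∈ (insert i (inNbrs E i)) \ R t i, w t i j) = 1 ∧
  x (t + 1) i = ∑ j ∈ (insert i (inNbrs E i)) \ R t i, w t i j * x t j


section Helpers
set_option linter.unusedSectionVars false

variable {V : Type*} [Fintype V] [DecidableEq V]

lemma wavg_le {S : Finset V} (w f : V → ℝ) {α c Mb : ℝ} (hα : 0 < α)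
    (hw : ∀ j ∈ S, α ≤ w j) (hsum : ∑ j ∈ S, w j = 1)
    {j0 : V} (hj0 : j0 ∈ S) (hj0v : f j0 ≤ c) (hcM : c ≤ Mb)
    (hf : ∀ j ∈ S, f j ≤ Mb) :
    ∑ j ∈ S, w j * f j ≤ α * c + (1 - α) * Mb := by
  have herase : ∀ g : V → ℝ, g j0 + ∑ j ∈ S.erase j0, g j = ∑ j ∈ S, g j :=
    fun g => Finset.add_sum_erase S g hj0
  have hwT : ∑ j ∈ S.erase j0, w j = 1 - w j0 := by
    have := herase w; rw [hsum] at this; linarith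
  have hwTnn : (0:ℝ) ≤ ∑ j ∈ S.erase j0, w j :=
    Finset.sum_nonneg fun j hj => le_trans hα.le (hw j (Finset.mem_of_mem_erase hj))
  have hT : ∑ j ∈ S.erase j0, w j * f j ≤ (1 - w j0) * Mb := by
    rw [← hwT, Finset.sum_mul]
    refine Finset.sum_le_sum fun j hj => ?_
    have hjS := Finset.mem_of_mem_erase hj
    exact mul_le_mul_of_nonneg_left (hf j hjS) (le_trans hα.le (hw j hjS))
  have hsplit := herase (fun j => w j * f j)
  have hwj0 : α ≤ w j0 := hw j0 hj0
  have h1 : ∑ j ∈ S, w j * f j ≤ w j0 * c + (1 - w j0) * Mb := by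
    have : w j0 * f j0 ≤ w j0 * c :=
      mul_le_mul_of_nonneg_left hj0v (le_trans hα.le hwj0)
    linarith
  nlinarith [mul_nonneg (sub_nonneg.2 hwj0) (sub_nonneg.2 hcM)]

lemma wavg_ge {S : Finset V} (w f : V → ℝ) {α c mb : ℝ} (hα : 0 < α)
    (hw : ∀ j ∈ S, α ≤ w j) (hsum : ∑ j ∈ S, w j = 1)
    {j0 : V} (hj0 : j0 ∈ S) (hj0v : c ≤ f j0) (hcM : mb ≤ c)
    (hf : ∀ j ∈ S, mb ≤ f j) :
    α * c + (1 - α) * mb ≤ ∑ j ∈ S, w j * f j := by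
  have herase : ∀ g : V → ℝ, g j0 + ∑ j ∈ S.erase j0, g j = ∑ j ∈ S, g j :=
    fun g => Finset.add_sum_erase S g hj0
  have hwT : ∑ j ∈ S.erase j0, w j = 1 - w j0 := by
    have := herase w; rw [hsum] at this; linarith
  have hT : (1 - w j0) * mb ≤ ∑ j ∈ S.erase j0, w j * f j := by
    rw [← hwT, Finset.sum_mul]
    refine Finset.sum_le_sum fun j hj => ?_
    have hjS := Finset.mem_of_mem_erase hj
    exact mul_le_mul_of_nonneg_left (hf j hjS) (le_trans hα.le (hw j hjS))
  have hsplit := herase (fun j => w j * f j)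
  have hwj0 : α ≤ w j0 := hw j0 hj0
  have h1 : w j0 * c + (1 - w j0) * mb ≤ ∑ j ∈ S, w j * f j := by
    have : w j0 * c ≤ w j0 * f j0 :=
      mul_le_mul_of_nonneg_left hj0v (le_trans hα.le hwj0)
    linarith
  nlinarith [mul_nonneg (sub_nonneg.2 hwj0) (sub_nonneg.2 hcM)]

/-- The removed set is contained in the in-neighborhood. -/
lemma validRemoved_subset {Vi : Finset V} {xt : V → ℝ} {i : V} {F : ℕ} {R : Finset V}
    (h : ValidRemoved Vi xt i F R) : R ⊆ Vi := by
  obtain ⟨Ra, Rb, hR, hRa, _, hRb, _⟩ := h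
  rw [hR]
  exact Finset.union_subset (hRa.trans (Finset.filter_subset _ _))
    (hRb.trans (Finset.filter_subset _ _))

/-- Self is in the kept set. -/
lemma self_mem_keep (E : Finset (V × V)) (hsimple : ∀ i : V, (i, i) ∉ E)
    {xt : V → ℝ} {i : V} {F : ℕ} {R : Finset V}
    (h : ValidRemoved (inNbrs E i) xt i F R) :
    i ∈ (insert i (inNbrs E i)) \ R := by
  have hi : i ∉ inNbrs E i := by simp [inNbrs, hsimple i]
  exact Finset.mem_sdiff.2 ⟨Finset.mem_insert_self _ _,
    fun hiR => hi (validRemoved_subset h hiR)⟩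

/-- Every kept value is at most any upper bound of the normal values. -/
lemma kept_le (E : Finset (V × V)) (A : Finset V) {F : ℕ}
    {xt : V → ℝ} {i : V} (hi : i ∉ A) {R : Finset V}
    (hA : (inNbrs E i ∩ A).card ≤ F)
    (hvr : ValidRemoved (inNbrs E i) xt i F R)
    {c : ℝ} (hc : ∀ j ∉ A, xt j ≤ c) :
    ∀ j ∈ (insert i (inNbrs E i)) \ R, xt j ≤ c := by
  intro j hj
  by_contra hgt
  push_neg at hgt
  rw [Finset.mem_sdiff] at hj
  have hjA : j ∈ A := by
    by_contra hjA; exact absurd (hc j hjA) (not_le.2 hgt)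
  have hji : j ≠ i := fun h => hi (h ▸ hjA)
  have hjV : j ∈ inNbrs E i := by
    rcases Finset.mem_insert.1 hj.1 with h | h
    · exact absurd h hji
    · exact h
  have hij : xt i < xt j := lt_of_le_of_lt (hc i hi) hgt
  have hjP : j ∈ (inNbrs E i).filter (fun k => xt i < xt k) :=
    Finset.mem_filter.2 ⟨hjV, hij⟩
  obtain ⟨Ra, Rb, hR, hRa, hRacase, hRb, hRbcase⟩ := hvr
  have hjRa : j ∉ Ra := fun h => hj.2 (hR ▸ Finset.mem_union_left _ h)
  rcases hRacase with ⟨heq, _⟩ | ⟨hcard, hmax⟩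
  · exact hjRa (heq ▸ hjP)
  · -- all F elements of Ra have value ≥ xt j > c, hence adversaries
    have hsub : insert j Ra ⊆ inNbrs E i ∩ A := by
      intro r hr
      rcases Finset.mem_insert.1 hr with h | h
      · exact h ▸ Finset.mem_inter.2 ⟨hjV, hjA⟩
      · have hrP := hRa h
        have hrV : r ∈ inNbrs E i := (Finset.mem_filter.1 hrP).1
        have hval : xt j ≤ xt r := hmax r h j (Finset.mem_sdiff.2 ⟨hjP, hjRa⟩)
        have hrA : r ∈ A := by
          by_contra hrA
          exact absurd (hc r hrA) (not_le.2 (lt_of_lt_of_le hgt hval))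
        exact Finset.mem_inter.2 ⟨hrV, hrA⟩
    have h2 := Finset.card_le_card hsub
    rw [Finset.card_insert_of_notMem hjRa, hcard] at h2
    omega

/-- Every kept value is at least any lower bound of the normal values. -/
lemma kept_ge (E : Finset (V × V)) (A : Finset V) {F : ℕ}
    {xt : V → ℝ} {i : V} (hi : i ∉ A) {R : Finset V}
    (hA : (inNbrs E i ∩ A).card ≤ F)
    (hvr : ValidRemoved (inNbrs E i) xt i F R)
    {c : ℝ} (hc : ∀ j ∉ A, c ≤ xt j) :
    ∀ j ∈ (insert i (inNbrs E i)) \ R, c ≤ xt j := by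
  intro j hj
  by_contra hgt
  push_neg at hgt
  rw [Finset.mem_sdiff] at hj
  have hjA : j ∈ A := by
    by_contra hjA; exact absurd (hc j hjA) (not_le.2 hgt)
  have hji : j ≠ i := fun h => hi (h ▸ hjA)
  have hjV : j ∈ inNbrs E i := by
    rcases Finset.mem_insert.1 hj.1 with h | h
    · exact absurd h hji
    · exact h
  have hij : xt j < xt i := lt_of_lt_of_le hgt (hc i hi)
  have hjP : j ∈ (inNbrs E i).filter (fun k => xt k < xt i) :=
    Finset.mem_filter.2 ⟨hjV, hij⟩
  obtain ⟨Ra, Rb, hR, hRa, hRacase, hRb, hRbcase⟩ := hvr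
  have hjRb : j ∉ Rb := fun h => hj.2 (hR ▸ Finset.mem_union_right _ h)
  rcases hRbcase with ⟨heq, _⟩ | ⟨hcard, hmin⟩
  · exact hjRb (heq ▸ hjP)
  · have hsub : insert j Rb ⊆ inNbrs E i ∩ A := by
      intro r hr
      rcases Finset.mem_insert.1 hr with h | h
      · exact h ▸ Finset.mem_inter.2 ⟨hjV, hjA⟩
      · have hrP := hRb h
        have hrV : r ∈ inNbrs E i := (Finset.mem_filter.1 hrP).1
        have hval : xt r ≤ xt j := hmin r h j (Finset.mem_sdiff.2 ⟨hjP, hjRb⟩)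
        have hrA : r ∈ A := by
          by_contra hrA
          exact absurd (hc r hrA) (not_le.2 (lt_of_le_of_lt hval hgt))
        exact Finset.mem_inter.2 ⟨hrV, hrA⟩
    have h2 := Finset.card_le_card hsub
    rw [Finset.card_insert_of_notMem hjRb, hcard] at h2
    omega

end Helpers

/-- Time-varying sufficiency for the `F`-local malicious model: if the time-varying
digraph `E t` is `(2F+1)`-robust for all `t ≥ t0` (for some `t0`), each normal node runs
discrete-time ARC-P with parameter `F`, and every normal node has at most `F` adversary
in-neighbors at all times, then the normal nodes achieve resilient asymptotic
consensus. -/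
theorem stmt15 {V : Type*} [Fintype V] [DecidableEq V]
    (hn : 2 ≤ Fintype.card V)
    (E : ℕ → Finset (V × V)) (hsimple : ∀ t : ℕ, ∀ i : V, (i, i) ∉ E t)
    (A : Finset V) (hN : (Finset.univ \ A).Nonempty)
    (F : ℕ) (α : ℝ) (hα0 : 0 < α) (hα1 : α < 1)
    (hA : ∀ i ∉ A, ∀ t : ℕ, (inNbrs (E t) i ∩ A).card ≤ F)
    (hrob : ∃ t0 : ℕ, ∀ t ≥ t0, rRobust (E t) (2 * F + 1))
    (x : ℕ → V → ℝ) (R : ℕ → V → Finset V) (w : ℕ → V → V → ℝ)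
    (hupd : ∀ t : ℕ, ∀ i ∉ A, ArcpUpdate (E t) F α x R w i t) :
    ∃ L : ℝ,
      (∀ i ∉ A, Filter.Tendsto (fun t => x t i) Filter.atTop (nhds L)) ∧
      ∀ t : ℕ, ∀ i ∉ A,
        x t i ∈ Set.Icc ((Finset.univ \ A).inf' hN (x 0))
          ((Finset.univ \ A).sup' hN (x 0)) := by
  classical
  obtain ⟨t0, hrob⟩ := hrob
  set N : Finset V := Finset.univ \ A with hNdef
  have hmemN : ∀ i : V, i ∈ N ↔ i ∉ A := by intro i; simp [hNdef]
  set Mf : ℕ → ℝ := fun s => N.sup' hN (x s) with hMfdef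
  set mf : ℕ → ℝ := fun s => N.inf' hN (x s) with hmfdef
  have hxleM : ∀ s : ℕ, ∀ i ∉ A, x s i ≤ Mf s := fun s i hi =>
    Finset.le_sup' (x s) ((hmemN i).2 hi)
  have hmlex : ∀ s : ℕ, ∀ i ∉ A, mf s ≤ x s i := fun s i hi =>
    Finset.inf'_le (x s) ((hmemN i).2 hi)
  -- one-step safety
  have hstepM : ∀ s : ℕ, ∀ i ∉ A, x (s+1) i ≤ Mf s := by
    intro s i hi
    obtain ⟨hvr, hwge, hwsum, hxe⟩ := hupd s i hi
    rw [hxe]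
    have hkept := kept_le (E s) A hi (hA i hi s) hvr (fun j hj => hxleM s j hj)
    have h := wavg_le (w s i) (x s) hα0 hwge hwsum
      (self_mem_keep (E s) (hsimple s) hvr) (hxleM s i hi) le_rfl hkept
    have heq : α * Mf s + (1 - α) * Mf s = Mf s := by ring
    linarith
  have hstepm : ∀ s : ℕ, ∀ i ∉ A, mf s ≤ x (s+1) i := by
    intro s i hi
    obtain ⟨hvr, hwge, hwsum, hxe⟩ := hupd s i hi
    rw [hxe]
    have hkept := kept_ge (E s) A hi (hA i hi s) hvr (fun j hj => hmlex s j hj)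
    have h := wavg_ge (w s i) (x s) hα0 hwge hwsum
      (self_mem_keep (E s) (hsimple s) hvr) (hmlex s i hi) le_rfl hkept
    have heq : α * mf s + (1 - α) * mf s = mf s := by ring
    linarith
  have hMant : Antitone Mf := antitone_nat_of_succ_le fun s =>
    Finset.sup'_le hN _ fun i hiN => hstepM s i ((hmemN i).1 hiN)
  have hmmon : Monotone mf := monotone_nat_of_le_succ fun s =>
    Finset.le_inf' hN _ fun i hiN => hstepm s i ((hmemN i).1 hiN)
  have hmleM : ∀ s : ℕ, mf s ≤ Mf s := by
    intro s
    obtain ⟨i0, hi0⟩ := hN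
    exact le_trans (Finset.inf'_le (x s) hi0) (Finset.le_sup' (x s) hi0)
  have hbound : ∀ s : ℕ, ∀ i ∉ A, x s i ∈ Set.Icc (mf 0) (Mf 0) := fun s i hi =>
    ⟨le_trans (hmmon (Nat.zero_le s)) (hmlex s i hi),
     le_trans (hxleM s i hi) (hMant (Nat.zero_le s))⟩
  have hbddM : BddBelow (Set.range Mf) := by
    refine ⟨mf 0, ?_⟩; rintro _ ⟨s, rfl⟩
    exact le_trans (hmmon (Nat.zero_le s)) (hmleM s)
  have hbddm : BddAbove (Set.range mf) := by
    refine ⟨Mf 0, ?_⟩; rintro _ ⟨s, rfl⟩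
    exact le_trans (hmleM s) (hMant (Nat.zero_le s))
  set AM : ℝ := ⨅ s, Mf s with hAMdef
  set Am : ℝ := ⨆ s, mf s with hAmdef
  have hMtend : Filter.Tendsto Mf Filter.atTop (nhds AM) := tendsto_atTop_ciInf hMant hbddM
  have hmtend : Filter.Tendsto mf Filter.atTop (nhds Am) := tendsto_atTop_ciSup hmmon hbddm
  have hAMle : ∀ s, AM ≤ Mf s := fun s => ciInf_le hbddM s
  have hAmge : ∀ s, mf s ≤ Am := fun s => le_ciSup hbddm s
  have hAmAM : Am ≤ AM := by
    refine ciSup_le fun s => le_ciInf fun u => ?_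
    exact le_trans (hmmon (le_max_left s u))
      (le_trans (hmleM (max s u)) (hMant (le_max_right s u)))
  -- the hard direction : AM ≤ Am
  have key : AM ≤ Am := by
    by_contra hlt
    push_neg at hlt
    set n : ℕ := 2 * Fintype.card V with hndef
    set ε0 : ℝ := (AM - Am)/4 with hε0def
    have hε0pos : 0 < ε0 := by simp only [hε0def]; linarith
    set ε : ℝ := α^n * ε0 / 2 with hεdef
    have hεpos : 0 < ε := by
      have := pow_pos hα0 n
      simp only [hεdef]; positivity
    set ek : ℕ → ℝ := fun k => α^k * (ε0 + ε) - ε with hekdef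
    have hek0 : ek 0 = ε0 := by simp [hekdef]
    have hekrec : ∀ k, ek (k+1) = α * ek k - (1-α)*ε := by
      intro k; simp only [hekdef, pow_succ]; ring
    have hekpos : ∀ k ≤ n, 0 < ek k := by
      intro k hk
      have h1 : α^n ≤ α^k := pow_le_pow_of_le_one hα0.le hα1.le hk
      have h3 : 0 < α^k := pow_pos hα0 k
      have h4 : α^n * ε0 = 2 * ε := by rw [hεdef]; ring
      have h5 : α^n * (ε0 + ε) ≤ α^k * (ε0 + ε) := by nlinarith
      have h6 : 0 ≤ α^n * ε := by positivity
      simp only [hekdef]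
      nlinarith
    have hekle : ∀ k, ek k ≤ ε0 := by
      intro k
      have h1 : α^k ≤ 1 := pow_le_one₀ hα0.le hα1.le
      have h3 : 0 < α^k := pow_pos hα0 k
      simp only [hekdef]
      nlinarith
    obtain ⟨t1, ht1⟩ := Filter.eventually_atTop.1
      ((hMtend.eventually (gt_mem_nhds (by linarith : AM < AM + ε))).and
        (hmtend.eventually (lt_mem_nhds (by linarith : Am - ε < Am))))
    set t : ℕ := max t0 t1 with htdef
    have htt0 : t0 ≤ t := le_max_left _ _
    have hMtk : ∀ k : ℕ, Mf (t+k) < AM + ε := fun k =>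
      lt_of_le_of_lt (hMant (le_trans (le_max_right t0 t1) (Nat.le_add_right t k)))
        (ht1 t1 le_rfl).1
    have hmtk : ∀ k : ℕ, Am - ε < mf (t+k) := fun k =>
      lt_of_lt_of_le (ht1 t1 le_rfl).2
        (hmmon (le_trans (le_max_right t0 t1) (Nat.le_add_right t k)))
    set Y1 : ℕ → Finset V := fun k => N.filter (fun i => AM - ek k < x (t+k) i) with hY1def
    set Y2 : ℕ → Finset V := fun k => N.filter (fun i => x (t+k) i < Am + ek k) with hY2def
    have hY1ne : ∀ k ≤ n, (Y1 k).Nonempty := by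
      intro k hk
      obtain ⟨i, hiN, hieq⟩ := Finset.exists_mem_eq_sup' hN (x (t+k))
      refine ⟨i, Finset.mem_filter.2 ⟨hiN, ?_⟩⟩
      have h1 := hAMle (t+k)
      have h2 := hekpos k hk
      simp only [hMfdef] at h1
      linarith [hieq ▸ h1]
    have hY2ne : ∀ k ≤ n, (Y2 k).Nonempty := by
      intro k hk
      obtain ⟨i, hiN, hieq⟩ := Finset.exists_mem_eq_inf' hN (x (t+k))
      refine ⟨i, Finset.mem_filter.2 ⟨hiN, ?_⟩⟩
      have h1 := hAmge (t+k)
      have h2 := hekpos k hk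
      simp only [hmfdef] at h1
      linarith [hieq ▸ h1]
    have hdisj : ∀ k ≤ n, Disjoint (Y1 k) (Y2 k) := by
      intro k hk
      have e3 : ek k ≤ ε0 := hekle k
      have e5 : AM - Am = 4 * ε0 := by rw [hε0def]; ring
      rw [Finset.disjoint_left]
      intro i h1 h2
      have e1 := (Finset.mem_filter.1 h1).2
      have e2 := (Finset.mem_filter.1 h2).2
      have e6 : AM - ek k < Am + ek k := lt_trans e1 e2
      nlinarith [hlt, e3, e5, e6]
    -- contraction step lemmas
    have hup1 : ∀ k, k ≤ n → ∀ i, i ∉ A →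
        (∃ j0 ∈ (insert i (inNbrs (E (t+k)) i)) \ R (t+k) i, x (t+k) j0 ≤ AM - ek k) →
        x (t+k+1) i ≤ AM - ek (k+1) := by
      intro k hk i hiA ⟨j0, hj0keep, hj0⟩
      obtain ⟨hvr, hwge, hwsum, hxe⟩ := hupd (t+k) i hiA
      rw [hxe]
      have hkept := kept_le (E (t+k)) A hiA (hA i hiA (t+k)) hvr
        (fun j hj => le_of_lt (lt_of_le_of_lt (hxleM (t+k) j hj) (hMtk k)))
      have hcM : AM - ek k ≤ AM + ε := by
        have := hekpos k hk; linarith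
      have h := wavg_le (w (t+k) i) (x (t+k)) hα0 hwge hwsum hj0keep hj0 hcM hkept
      have heq : α * (AM - ek k) + (1 - α) * (AM + ε) = AM - ek (k+1) := by
        rw [hekrec]; ring
      linarith
    have hup2 : ∀ k, k ≤ n → ∀ i, i ∉ A →
        (∃ j0 ∈ (insert i (inNbrs (E (t+k)) i)) \ R (t+k) i, Am + ek k ≤ x (t+k) j0) →
        Am + ek (k+1) ≤ x (t+k+1) i := by
      intro k hk i hiA ⟨j0, hj0keep, hj0⟩
      obtain ⟨hvr, hwge, hwsum, hxe⟩ := hupd (t+k) i hiA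
      rw [hxe]
      have hkept := kept_ge (E (t+k)) A hiA (hA i hiA (t+k)) hvr
        (fun j hj => le_of_lt (lt_of_lt_of_le (hmtk k) (hmlex (t+k) j hj)))
      have hcM : Am - ε ≤ Am + ek k := by
        have := hekpos k hk; linarith
      have h := wavg_ge (w (t+k) i) (x (t+k)) hα0 hwge hwsum hj0keep hj0 hcM hkept
      have heq : α * (Am + ek k) + (1 - α) * (Am - ε) = Am + ek (k+1) := by
        rw [hekrec]; ring
      linarith
    have hadd : ∀ k : ℕ, t + (k+1) = t + k + 1 := fun k => rfl
    have hsub1 : ∀ k < n, Y1 (k+1) ⊆ Y1 k := by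
      intro k hk i hi
      have hiN := (Finset.mem_filter.1 hi).1
      have hiA : i ∉ A := (hmemN i).1 hiN
      refine Finset.mem_filter.2 ⟨hiN, ?_⟩
      by_contra hle
      push_neg at hle
      have hself := self_mem_keep (E (t+k)) (hsimple (t+k)) (hupd (t+k) i hiA).1
      have hstep := hup1 k hk.le i hiA ⟨i, hself, hle⟩
      have h2 := (Finset.mem_filter.1 hi).2
      rw [hadd k] at h2
      linarith
    have hsub2 : ∀ k < n, Y2 (k+1) ⊆ Y2 k := by
      intro k hk i hi
      have hiN := (Finset.mem_filter.1 hi).1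
      have hiA : i ∉ A := (hmemN i).1 hiN
      refine Finset.mem_filter.2 ⟨hiN, ?_⟩
      by_contra hle
      push_neg at hle
      have hself := self_mem_keep (E (t+k)) (hsimple (t+k)) (hupd (t+k) i hiA).1
      have hstep := hup2 k hk.le i hiA ⟨i, hself, hle⟩
      have h2 := (Finset.mem_filter.1 hi).2
      rw [hadd k] at h2
      linarith
    have hdec : ∀ k < n, (Y1 (k+1)).card + (Y2 (k+1)).card < (Y1 k).card + (Y2 k).card := by
      intro k hk
      have hkn : k ≤ n := hk.le
      have hrk := hrob (t+k) (le_trans htt0 (Nat.le_add_right t k)) (Y1 k) (Y2 k)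
        (hY1ne k hkn) (hY2ne k hkn) (hdisj k hkn)
      rcases hrk with ⟨i, hiY, hreach⟩ | ⟨i, hiY, hreach⟩
      · -- Y1 is reachable
        have hiN := (Finset.mem_filter.1 hiY).1
        have hiA : i ∉ A := (hmemN i).1 hiN
        set B : Finset V := (inNbrs (E (t+k)) i) \ Y1 k with hBdef
        have hBA : (B ∩ A).card ≤ F :=
          le_trans (Finset.card_le_card (by
            intro j hj
            rw [Finset.mem_inter] at hj ⊢
            exact ⟨(Finset.mem_sdiff.1 hj.1).1, hj.2⟩)) (hA i hiA (t+k))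
        have hBsplit : (B ∩ A).card + (B \ A).card = B.card :=
          Finset.card_inter_add_card_sdiff B A
        have hBcard : F + 1 ≤ (B \ A).card := by omega
        obtain ⟨hvr, _, _, _⟩ := hupd (t+k) i hiA
        obtain ⟨Ra, Rb, hReq, hRa, hRacase, hRb, hRbcase⟩ := hvr
        have hRbF : Rb.card ≤ F := by
          rcases hRbcase with ⟨_, h⟩ | ⟨h, _⟩
          · exact h
          · exact h.le
        have hsmall : ∀ j ∈ B \ A, x (t+k) j ≤ AM - ek k := by
          intro j hj
          rw [Finset.mem_sdiff] at hj
          have hjB := Finset.mem_sdiff.1 hj.1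
          have hjN : j ∈ N := (hmemN j).2 hj.2
          by_contra hgt
          push_neg at hgt
          exact hjB.2 (Finset.mem_filter.2 ⟨hjN, hgt⟩)
        have hxi : AM - ek k < x (t+k) i := (Finset.mem_filter.1 hiY).2
        have hnotRa : ∀ j ∈ B \ A, j ∉ Ra := by
          intro j hj hjRa
          have := (Finset.mem_filter.1 (hRa hjRa)).2
          linarith [hsmall j hj]
        have hnsub : ¬ (B \ A ⊆ R (t+k) i) := by
          intro hsubR
          have hinRb : B \ A ⊆ Rb := fun j hj =>
            (Finset.mem_union.1 (by rw [← hReq]; exact hsubR hj)).resolve_left (hnotRa j hj)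
          have := Finset.card_le_card hinRb
          omega
        obtain ⟨j0, hj0B, hj0R⟩ := Finset.not_subset.1 hnsub
        have hj0keep : j0 ∈ insert i (inNbrs (E (t+k)) i) \ R (t+k) i :=
          Finset.mem_sdiff.2 ⟨Finset.mem_insert_of_mem
            (Finset.mem_sdiff.1 (Finset.mem_sdiff.1 hj0B).1).1, hj0R⟩
        have hstep := hup1 k hkn i hiA ⟨j0, hj0keep, hsmall j0 hj0B⟩
        have hiout : i ∉ Y1 (k+1) := by
          intro hmem
          have h2 := (Finset.mem_filter.1 hmem).2
          rw [hadd k] at h2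
          linarith
        have hc1 : (Y1 (k+1)).card < (Y1 k).card :=
          Finset.card_lt_card ⟨hsub1 k hk, fun hss => hiout (hss hiY)⟩
        have hc2 : (Y2 (k+1)).card ≤ (Y2 k).card := Finset.card_le_card (hsub2 k hk)
        omega
      · -- Y2 is reachable
        have hiN := (Finset.mem_filter.1 hiY).1
        have hiA : i ∉ A := (hmemN i).1 hiN
        set B : Finset V := (inNbrs (E (t+k)) i) \ Y2 k with hBdef
        have hBA : (B ∩ A).card ≤ F :=
          le_trans (Finset.card_le_card (by
            intro j hj
            rw [Finset.mem_inter] at hj ⊢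
            exact ⟨(Finset.mem_sdiff.1 hj.1).1, hj.2⟩)) (hA i hiA (t+k))
        have hBsplit : (B ∩ A).card + (B \ A).card = B.card :=
          Finset.card_inter_add_card_sdiff B A
        have hBcard : F + 1 ≤ (B \ A).card := by omega
        obtain ⟨hvr, _, _, _⟩ := hupd (t+k) i hiA
        obtain ⟨Ra, Rb, hReq, hRa, hRacase, hRb, hRbcase⟩ := hvr
        have hRaF : Ra.card ≤ F := by
          rcases hRacase with ⟨_, h⟩ | ⟨h, _⟩
          · exact h
          · exact h.le
        have hbig : ∀ j ∈ B \ A, Am + ek k ≤ x (t+k) j := by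
          intro j hj
          rw [Finset.mem_sdiff] at hj
          have hjB := Finset.mem_sdiff.1 hj.1
          have hjN : j ∈ N := (hmemN j).2 hj.2
          by_contra hgt
          push_neg at hgt
          exact hjB.2 (Finset.mem_filter.2 ⟨hjN, hgt⟩)
        have hxi : x (t+k) i < Am + ek k := (Finset.mem_filter.1 hiY).2
        have hnotRb : ∀ j ∈ B \ A, j ∉ Rb := by
          intro j hj hjRb
          have := (Finset.mem_filter.1 (hRb hjRb)).2
          linarith [hbig j hj]
        have hnsub : ¬ (B \ A ⊆ R (t+k) i) := by
          intro hsubR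
          have hinRa : B \ A ⊆ Ra := fun j hj =>
            (Finset.mem_union.1 (by rw [← hReq]; exact hsubR hj)).resolve_right (hnotRb j hj)
          have := Finset.card_le_card hinRa
          omega
        obtain ⟨j0, hj0B, hj0R⟩ := Finset.not_subset.1 hnsub
        have hj0keep : j0 ∈ insert i (inNbrs (E (t+k)) i) \ R (t+k) i :=
          Finset.mem_sdiff.2 ⟨Finset.mem_insert_of_mem
            (Finset.mem_sdiff.1 (Finset.mem_sdiff.1 hj0B).1).1, hj0R⟩
        have hstep := hup2 k hkn i hiA ⟨j0, hj0keep, hbig j0 hj0B⟩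
        have hiout : i ∉ Y2 (k+1) := by
          intro hmem
          have h2 := (Finset.mem_filter.1 hmem).2
          rw [hadd k] at h2
          linarith
        have hc1 : (Y2 (k+1)).card < (Y2 k).card :=
          Finset.card_lt_card ⟨hsub2 k hk, fun hss => hiout (hss hiY)⟩
        have hc2 : (Y1 (k+1)).card ≤ (Y1 k).card := Finset.card_le_card (hsub1 k hk)
        omega
    -- counting contradiction
    have hcount : ∀ k ≤ n, (Y1 k).card + (Y2 k).card + k ≤ (Y1 0).card + (Y2 0).card := by
      intro k
      induction k with
      | zero => intro _; omega
      | succ k ih =>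
        intro hk
        have h1 := ih (by omega)
        have h2 := hdec k (by omega)
        omega
    have hfin := hcount n le_rfl
    have h01 : (Y1 0).card ≤ Fintype.card V := by
      have := Finset.card_le_univ (Y1 0)
      simpa [Finset.card_univ] using this
    have h02 : (Y2 0).card ≤ Fintype.card V := by
      have := Finset.card_le_univ (Y2 0)
      simpa [Finset.card_univ] using this
    have hne1 := Finset.card_pos.2 (hY1ne n le_rfl)
    have hne2 := Finset.card_pos.2 (hY2ne n le_rfl)
    have hnval : n = 2 * Fintype.card V := hndef
    omega
  have hEq : Am = AM := le_antisymm hAmAM key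
  refine ⟨AM, ?_, ?_⟩
  · intro i hi
    have hmtend' : Filter.Tendsto mf Filter.atTop (nhds AM) := hEq ▸ hmtend
    exact tendsto_of_tendsto_of_tendsto_of_le_of_le hmtend' hMtend
      (fun s => hmlex s i hi) (fun s => hxleM s i hi)
  · intro s i hi
    exact hbound s i hi
end

section
/- Fix F, k ∈ ℕ and a weight vector w ∈ ℝ^k with 0 < α ≤ w_l ≤ β for all l. Then the weighted zero-selective reduce function z ↦ r_{0,F}^k(z, w) from ℝ^k to ℝ is globally Lipschitz with Lipschitz constant β with respect to the ℓ¹ norm on ℝ^k: |r_{0,F}^k(z, w) − r_{0,F}^k(y, w)| ≤ β Σ_{l=1}^k |z_l − y_l| for all z, y ∈ ℝ^k. -/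
/-- `1_{≥0}(a) · a`. -/
noncomputable def indGe (a : ℝ) : ℝ := if 0 ≤ a then a else 0

/-- `1_{≤0}(a) · a`. -/
noncomputable def indLe (a : ℝ) : ℝ := if a ≤ 0 then a else 0

/-- The `l`-th summand of the weighted zero-selective reduce function `r_{0,F}^k`
(with 0-based indexing: index `l` here corresponds to index `l+1` in the paper). -/
noncomputable def reduceTerm (F k : ℕ) (z w : Fin k → ℝ) (l : Fin k) : ℝ :=
  if k ≤ F then 0
  else if k ≤ 2 * F then
    (if (l : ℕ) < k - F then w l * indGe (z l) else 0) +
    (if F ≤ (l : ℕ) then w l * indLe (z l) else 0)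
  else
    if (l : ℕ) < F then w l * indGe (z l)
    else if (l : ℕ) < k - F then w l * z l
    else w l * indLe (z l)

/-- The weighted zero-selective reduce function `r_{0,F}^k : ℝ^k × ℝ^k → ℝ`. -/
noncomputable def r0F (F k : ℕ) (z w : Fin k → ℝ) : ℝ := ∑ l, reduceTerm F k z w l

lemma indGe_lip (a b : ℝ) : |indGe a - indGe b| ≤ |a - b| := by
  have h1 := le_abs_self (a - b)
  have h2 := neg_abs_le (a - b)
  unfold indGe
  split <;> split <;> rw [abs_le] <;> constructor <;> linarith

lemma indLe_lip (a b : ℝ) : |indLe a - indLe b| ≤ |a - b| := by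
  have h1 := le_abs_self (a - b)
  have h2 := neg_abs_le (a - b)
  unfold indLe
  split <;> split <;> rw [abs_le] <;> constructor <;> linarith

lemma term_lip (F k : ℕ) (z y w : Fin k → ℝ) (hw : 0 ≤ w) (l : Fin k) :
    |reduceTerm F k z w l - reduceTerm F k y w l| ≤ w l * |z l - y l| := by
  have h0 : 0 ≤ w l := hw l
  have hge := indGe_lip (z l) (y l)
  have hle := indLe_lip (z l) (y l)
  have hmul : ∀ u v : ℝ, |u - v| ≤ |z l - y l| →
      |w l * u - w l * v| ≤ w l * |z l - y l| := by
    intro u v h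
    rw [← mul_sub, abs_mul, abs_of_nonneg h0]
    exact mul_le_mul_of_nonneg_left h h0
  unfold reduceTerm
  split
  · simpa using mul_nonneg h0 (abs_nonneg _)
  · split
    · rename_i hk1 hk2
      rcases lt_or_ge (l : ℕ) (k - F) with h1 | h1
      · have h2 : ¬ F ≤ (l : ℕ) := by omega
        simp only [if_pos h1, if_neg h2, add_zero]
        exact hmul _ _ hge
      · simp only [if_neg (not_lt.mpr h1), zero_add]
        split
        · exact hmul _ _ hle
        · simpa using mul_nonneg h0 (abs_nonneg _)
    · split
      · exact hmul _ _ hge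
      · split
        · exact hmul _ _ (le_of_eq rfl)
        · exact hmul _ _ hle

/-- The weighted zero-selective reduce function `z ↦ r_{0,F}^k(z, w)` is globally
Lipschitz with constant `β` with respect to the `ℓ¹` norm, whenever the weights satisfy
`0 < α ≤ w_l ≤ β`. -/
theorem stmt16 (F k : ℕ) (α β : ℝ) (hα : 0 < α) (w : Fin k → ℝ)
    (hw : ∀ l, α ≤ w l ∧ w l ≤ β) :
    ∀ z y : Fin k → ℝ,
      |r0F F k z w - r0F F k y w| ≤ β * ∑ l, |z l - y l| := by
  intro z y
  have hw0 : 0 ≤ w := fun l => le_of_lt (lt_of_lt_of_le hα (hw l).1)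
  calc |r0F F k z w - r0F F k y w|
      = |∑ l, (reduceTerm F k z w l - reduceTerm F k y w l)| := by
        rw [r0F, r0F, Finset.sum_sub_distrib]
    _ ≤ ∑ l, |reduceTerm F k z w l - reduceTerm F k y w l| :=
        Finset.abs_sum_le_sum_abs _ _
    _ ≤ ∑ l, β * |z l - y l| := by
        apply Finset.sum_le_sum
        intro l _
        exact le_trans (term_lip F k z y w hw0 l)
          (mul_le_mul_of_nonneg_right (hw l).2 (abs_nonneg _))
    _ = β * ∑ l, |z l - y l| := by rw [Finset.mul_sum]
end

section
/- Fix a digraph on n nodes with normal node set N, a parameter F ∈ ℕ, and for each normal node i a weight vector w_i ∈ ℝ^{d_i} with entries in [α, β] (0 < α ≤ β), where d_i is the in-degree of i. Define f : ℝ^n → ℝ^{|N|} componentwise by f_i(x) = φ_F^{d_i}(J_i (x − x_i 1_n), w_i), where J_i ∈ ℝ^{d_i × n} is the 0-1 matrix selecting the coordinates of the in-neighbors of i, 1_n ∈ ℝ^n is the all-ones vector, and φ_F^k(z, w) = r_{0,F}^k(ρ_k(z), w). Then f is globally Lipschitz on ℝ^n; in particular, each component f_i is Lipschitz with constant 2β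 d_i with respect to the ℓ¹ norm, since z ↦ r_{0,F}^k(z,w) is β-Lipschitz in ℓ¹, ρ_k is nonexpansive in ℓ¹, and x ↦ J_i(x − x_i 1_n) is linear. -/
/-- The sorting function `ρ_k : ℝ^k → ℝ^k` (nondecreasing rearrangement). -/
noncomputable def sortFun (k : ℕ) (z : Fin k → ℝ) : Fin k → ℝ :=
  z ∘ Tuple.sort z

/-- `φ_F^k(z, w) = r_{0,F}^k(ρ_k(z), w)`. -/
noncomputable def phiF (F k : ℕ) (z w : Fin k → ℝ) : ℝ :=
  r0F F k (sortFun k z) w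

open Finset

lemma two_exchange {p q s t : ℝ} (h1 : p ≤ q) (h2 : s ≤ t) :
    |p - s| + |q - t| ≤ |p - t| + |q - s| := by
  have A := le_abs_self (p - t)
  have B := neg_abs_le (p - t)
  have C := le_abs_self (q - s)
  have D := neg_abs_le (q - s)
  rcases abs_cases (p - s) with ⟨e1, _⟩ | ⟨e1, _⟩ <;>
    rcases abs_cases (q - t) with ⟨e2, _⟩ | ⟨e2, _⟩ <;> linarith

lemma key_perm {k : ℕ} (a b : Fin k → ℝ) (ha : Monotone a) (hb : Monotone b)
    (σ : Equiv.Perm (Fin k)) :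
    ∑ i, |a i - b i| ≤ ∑ i, |a i - b (σ i)| := by
  suffices H : ∀ n (σ : Equiv.Perm (Fin k)),
      (univ.filter fun i => σ i ≠ i).card ≤ n →
      ∑ i, |a i - b i| ≤ ∑ i, |a i - b (σ i)| from
    H _ σ le_rfl
  intro n
  induction n with
  | zero =>
    intro σ hcard
    have hid : ∀ i, σ i = i := by
      intro i
      by_contra hi
      have : i ∈ univ.filter fun i => σ i ≠ i := by simp [hi]
      have := card_pos.mpr ⟨i, this⟩
      omega
    refine le_of_eq (Finset.sum_congr rfl fun i _ => by rw [hid i])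
  | succ n ih =>
    intro σ hcard
    by_cases hall : ∀ i, σ i = i
    · exact le_of_eq (Finset.sum_congr rfl fun i _ => by rw [hall i])
    push_neg at hall
    set D := univ.filter fun i => σ i ≠ i with hD
    have hne : D.Nonempty := by
      obtain ⟨i, hi⟩ := hall
      exact ⟨i, by simp [hD, hi]⟩
    set m := D.max' hne with hm
    have hmD : m ∈ D := D.max'_mem hne
    have hσm : σ m ≠ m := by simpa [hD] using hmD
    have hfix : ∀ i, m < i → σ i = i := by
      intro i hi
      by_contra h
      have : i ∈ D := by simp [hD, h]
      exact absurd (D.le_max' i this) (not_le.mpr hi)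
    have hσmlt : σ m < m := by
      rcases lt_trichotomy (σ m) m with h | h | h
      · exact h
      · exact absurd h hσm
      · exact absurd (σ.injective (hfix (σ m) h)) hσm
    set j := σ.symm m with hj
    have hσj : σ j = m := σ.apply_symm_apply m
    have hjm : j ≠ m := fun h => hσm (h ▸ hσj)
    have hjlt : j < m := by
      rcases lt_trichotomy j m with h | h | h
      · exact h
      · exact absurd h hjm
      · exact absurd ((hfix j h).symm.trans hσj) (ne_of_gt h)
    set σ' := σ * Equiv.swap j m with hσ'
    have hσ'm : σ' m = m := by
      simp [hσ', Equiv.Perm.mul_apply, Equiv.swap_apply_right, hσj]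
    have hσ'j : σ' j = σ m := by
      simp [hσ', Equiv.Perm.mul_apply, Equiv.swap_apply_left]
    have hσ'other : ∀ i, i ≠ j → i ≠ m → σ' i = σ i := by
      intro i h1 h2
      simp [hσ', Equiv.Perm.mul_apply, Equiv.swap_apply_of_ne_of_ne h1 h2]
    -- card bound
    have hsub : (univ.filter fun i => σ' i ≠ i) ⊆ D.erase m := by
      intro i hi
      simp only [mem_filter, mem_univ, true_and] at hi
      rcases eq_or_ne i m with rfl | him
      · exact absurd hσ'm hi
      rcases eq_or_ne i j with rfl | hij
      · exact mem_erase.mpr ⟨him, by simp [hD, hσj]; exact fun h => hjm h.symm⟩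
      · exact mem_erase.mpr ⟨him, by simp [hD]; rw [← hσ'other i hij him]; exact hi⟩
    have hcard' : (univ.filter fun i => σ' i ≠ i).card ≤ n := by
      have h1 := card_le_card hsub
      have h2 : (D.erase m).card = D.card - 1 := card_erase_of_mem hmD
      have h3 : 0 < D.card := card_pos.mpr hne
      omega
    refine (ih σ' hcard').trans ?_
    -- exchange step
    have hpair : |a j - b (σ' j)| + |a m - b (σ' m)| ≤ |a j - b (σ j)| + |a m - b (σ m)| := by
      rw [hσ'j, hσ'm, hσj]
      exact two_exchange (ha hjlt.le) (hb hσmlt.le)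
    have hsplit : ∀ τ : Equiv.Perm (Fin k),
        ∑ i, |a i - b (τ i)| =
          ∑ i ∈ univ \ {j, m}, |a i - b (τ i)| + (|a j - b (τ j)| + |a m - b (τ m)|) := by
      intro τ
      rw [← Finset.sum_sdiff (subset_univ {j, m}), Finset.sum_pair hjm]
    rw [hsplit σ', hsplit σ]
    refine add_le_add (le_of_eq (Finset.sum_congr rfl fun i hi => ?_)) hpair
    simp only [mem_sdiff, mem_univ, true_and, mem_insert, mem_singleton, not_or] at hi
    rw [hσ'other i hi.1 hi.2]

lemma sort_nonexpansive {k : ℕ} (x y : Fin k → ℝ) :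
    ∑ i, |sortFun k x i - sortFun k y i| ≤ ∑ i, |x i - y i| := by
  have h := key_perm (sortFun k x) (sortFun k y)
    (Tuple.monotone_sort x) (Tuple.monotone_sort y)
    ((Tuple.sort y)⁻¹ * Tuple.sort x)
  refine h.trans (le_of_eq ?_)
  have : ∀ i, sortFun k y (((Tuple.sort y)⁻¹ * Tuple.sort x) i) = y (Tuple.sort x i) := by
    intro i
    simp [sortFun, Equiv.Perm.mul_apply]
  calc ∑ i, |sortFun k x i - sortFun k y (((Tuple.sort y)⁻¹ * Tuple.sort x) i)|
      = ∑ i, |x (Tuple.sort x i) - y (Tuple.sort x i)| := by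
        refine Finset.sum_congr rfl fun i _ => by rw [this i]; rfl
    _ = ∑ i, |x i - y i| := Equiv.sum_comp (Tuple.sort x) (fun v => |x v - y v|)

lemma indGe_indLe (s : ℝ) : indGe s + indLe s = s := by
  unfold indGe indLe; split_ifs <;> linarith

lemma indGe_mono : Monotone indGe := by
  intro t s h; unfold indGe; split_ifs <;> linarith

lemma indLe_mono : Monotone indLe := by
  intro t s h; unfold indLe; split_ifs <;> linarith

lemma ind_abs (s t : ℝ) : |indGe s - indGe t| + |indLe s - indLe t| = |s - t| := by
  have h1 := indGe_indLe s
  have h2 := indGe_indLe t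
  rcases le_total t s with h | h
  · rw [abs_of_nonneg (sub_nonneg.mpr (indGe_mono h)),
      abs_of_nonneg (sub_nonneg.mpr (indLe_mono h)),
      abs_of_nonneg (sub_nonneg.mpr h)]
    linarith
  · rw [abs_of_nonpos (sub_nonpos.mpr (indGe_mono h)),
      abs_of_nonpos (sub_nonpos.mpr (indLe_mono h)),
      abs_of_nonpos (sub_nonpos.mpr h)]
    linarith

lemma reduceTerm_lip {F k : ℕ} (z z' w : Fin k → ℝ) (l : Fin k)
    {β : ℝ} (hw0 : 0 ≤ w l) (hwβ : w l ≤ β) :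
    |reduceTerm F k z w l - reduceTerm F k z' w l| ≤ β * |z l - z' l| := by
  have hβ : 0 ≤ β := hw0.trans hwβ
  have hge : |indGe (z l) - indGe (z' l)| ≤ |z l - z' l| := by
    have := ind_abs (z l) (z' l); have := abs_nonneg (indLe (z l) - indLe (z' l)); linarith
  have hle : |indLe (z l) - indLe (z' l)| ≤ |z l - z' l| := by
    have := ind_abs (z l) (z' l); have := abs_nonneg (indGe (z l) - indGe (z' l)); linarith
  have habs : |w l| = w l := abs_of_nonneg hw0
  have mul_bound : ∀ u v : ℝ, |u - v| ≤ |z l - z' l| → |w l * u - w l * v| ≤ β * |z l - z' l| := by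
    intro u v h
    rw [← mul_sub, abs_mul, habs]
    exact mul_le_mul hwβ h (abs_nonneg _) hβ
  have double : |w l * indGe (z l) + w l * indLe (z l)
      - (w l * indGe (z' l) + w l * indLe (z' l))| ≤ β * |z l - z' l| := by
    have e : w l * indGe (z l) + w l * indLe (z l)
        - (w l * indGe (z' l) + w l * indLe (z' l))
        = (w l * indGe (z l) - w l * indGe (z' l))
          + (w l * indLe (z l) - w l * indLe (z' l)) := by ring
    rw [e]
    refine (abs_add_le _ _).trans ?_
    rw [← mul_sub, ← mul_sub, abs_mul, abs_mul, habs, ← mul_add, ind_abs]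
    exact mul_le_mul_of_nonneg_right hwβ (abs_nonneg _)
  unfold reduceTerm
  split_ifs
  all_goals try simp only [add_zero, zero_add]
  all_goals first
    | simpa using mul_nonneg hβ (abs_nonneg _)
    | exact double
    | exact mul_bound _ _ hge
    | exact mul_bound _ _ hle
    | exact mul_bound _ _ le_rfl

lemma phiF_lip {F k : ℕ} (z z' w : Fin k → ℝ) {β : ℝ}
    (hw : ∀ l, 0 ≤ w l ∧ w l ≤ β) :
    |phiF F k z w - phiF F k z' w| ≤ β * ∑ l, |z l - z' l| := by
  have h1 : |phiF F k z w - phiF F k z' w|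
      ≤ ∑ l, |reduceTerm F k (sortFun k z) w l - reduceTerm F k (sortFun k z') w l| := by
    unfold phiF r0F
    rw [← Finset.sum_sub_distrib]
    exact Finset.abs_sum_le_sum_abs _ _
  refine h1.trans ?_
  calc ∑ l, |reduceTerm F k (sortFun k z) w l - reduceTerm F k (sortFun k z') w l|
      ≤ ∑ l, β * |sortFun k z l - sortFun k z' l| :=
        Finset.sum_le_sum fun l _ => reduceTerm_lip _ _ _ _ (hw l).1 (hw l).2
    _ = β * ∑ l, |sortFun k z l - sortFun k z' l| := by rw [Finset.mul_sum]
    _ ≤ β * ∑ l, |z l - z' l| := by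
        by_cases hβ : 0 ≤ β
        · exact mul_le_mul_of_nonneg_left (sort_nonexpansive z z') hβ
        · cases k with
          | zero => simp
          | succ k => exact absurd ((hw 0).1.trans (hw 0).2) hβ

/-- The ARC-P vector field `f`, with components
`f_i(x) = φ_F^{d_i}(J_i (x - x_i 1_n), w_i)` (where `J_i` selects the coordinates of
the in-neighbors of `i`, here realized by an enumeration `e i` of `inNbrs E i`), is
globally Lipschitz; in particular each component `f_i` is Lipschitz with constant
`2 β d_i` with respect to the `ℓ¹` norm, when the weights lie in `[α, β]` with
`0 < α ≤ β`. -/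
theorem stmt18 {V : Type*} [Fintype V] [DecidableEq V]
    (E : Finset (V × V)) (Nset : Finset V)
    (F : ℕ) (α β : ℝ) (hα : 0 < α) (hαβ : α ≤ β)
    (w : ∀ i : V, Fin (inNbrs E i).card → ℝ)
    (hw : ∀ i l, α ≤ w i l ∧ w i l ≤ β)
    -- `e i` enumerates the in-neighbors of `i` (the rows of `J_i`)
    (e : ∀ i : V, Fin (inNbrs E i).card → V)
    (he : ∀ i : V, Function.Injective (e i))
    (he' : ∀ i l, e i l ∈ inNbrs E i)
    (f : V → (V → ℝ) → ℝ)
    (hf : ∀ (i : V) (x : V → ℝ),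
      f i x = phiF F (inNbrs E i).card (fun l => x (e i l) - x i) (w i)) :
    (∀ i ∈ Nset, ∀ x y : V → ℝ,
      |f i x - f i y| ≤ 2 * β * (inNbrs E i).card * ∑ v, |x v - y v|) ∧
    ∃ L : ℝ, 0 ≤ L ∧ ∀ x y : V → ℝ,
      ∑ i ∈ Nset, |f i x - f i y| ≤ L * ∑ v, |x v - y v| := by
  have hβ : 0 < β := hα.trans_le hαβ
  have main : ∀ (i : V) (x y : V → ℝ),
      |f i x - f i y| ≤ 2 * β * (inNbrs E i).card * ∑ v, |x v - y v| := by
    intro i x y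
    set S := ∑ v, |x v - y v| with hS
    have hS0 : 0 ≤ S := Finset.sum_nonneg fun v _ => abs_nonneg _
    rcases Nat.eq_zero_or_pos (inNbrs E i).card with hd | hd
    · haveI : IsEmpty (Fin (inNbrs E i).card) := by rw [hd]; infer_instance
      have h0 : ∀ z wv : Fin (inNbrs E i).card → ℝ, r0F F (inNbrs E i).card z wv = 0 := by
        intro z wv; unfold r0F; rw [Finset.univ_eq_empty, Finset.sum_empty]
      rw [hf i x, hf i y]
      unfold phiF
      rw [h0, h0, hd]
      simp [hS0, mul_nonneg, hβ.le]
    · rw [hf i x, hf i y]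
      have h1 := phiF_lip (F := F) (fun l => x (e i l) - x i) (fun l => y (e i l) - y i) (w i)
        (fun l => ⟨hα.le.trans (hw i l).1, (hw i l).2⟩)
      refine h1.trans ?_
      have h2 : ∀ l : Fin (inNbrs E i).card,
          |(x (e i l) - x i) - (y (e i l) - y i)| ≤ |x (e i l) - y (e i l)| + |x i - y i| := by
        intro l
        have : (x (e i l) - x i) - (y (e i l) - y i) = (x (e i l) - y (e i l)) - (x i - y i) := by
          ring
        rw [this]
        exact abs_sub _ _
      have h3 : ∑ l, |x (e i l) - y (e i l)| ≤ S := by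
        have him := Finset.sum_image (s := (Finset.univ : Finset (Fin (inNbrs E i).card)))
          (g := e i) (f := fun v => |x v - y v|) (fun a _ b _ hab => he i hab)
        rw [hS, ← him]
        exact Finset.sum_le_sum_of_subset_of_nonneg (Finset.subset_univ _)
          fun v _ _ => abs_nonneg _
      have h4 : |x i - y i| ≤ S :=
        Finset.single_le_sum (f := fun v => |x v - y v|) (fun v _ => abs_nonneg _)
          (Finset.mem_univ i)
      calc β * ∑ l, |(x (e i l) - x i) - (y (e i l) - y i)|
          ≤ β * ∑ l : Fin (inNbrs E i).card, (|x (e i l) - y (e i l)| + |x i - y i|) :=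
            mul_le_mul_of_nonneg_left (Finset.sum_le_sum fun l _ => h2 l) hβ.le
        _ = β * (∑ l, |x (e i l) - y (e i l)| + (inNbrs E i).card * |x i - y i|) := by
            rw [Finset.sum_add_distrib, Finset.sum_const, nsmul_eq_mul, Finset.card_univ, Fintype.card_fin]
        _ ≤ β * (S + (inNbrs E i).card * S) := by
            refine mul_le_mul_of_nonneg_left (add_le_add h3 ?_) hβ.le
            exact mul_le_mul_of_nonneg_left h4 (Nat.cast_nonneg _)
        _ ≤ 2 * β * (inNbrs E i).card * S := by
            have hd1 : (1 : ℝ) ≤ (inNbrs E i).card := by exact_mod_cast hd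
            nlinarith [mul_nonneg (mul_nonneg hβ.le hS0) (sub_nonneg.mpr hd1)]
  refine ⟨fun i _ => main i, ∑ i ∈ Nset, 2 * β * (inNbrs E i).card, ?_, ?_⟩
  · exact Finset.sum_nonneg fun i _ => by positivity
  · intro x y
    rw [Finset.sum_mul]
    exact Finset.sum_le_sum fun i _ => main i x y
end

section
/- Let D_0 be a nonempty, nontrivial (r,s)-robust digraph, and let D_0, D_1, …, D_K be a sequence of digraphs in which each D_{k+1} is obtained from D_k by adding one new vertex together with directed edges incident to it such that the new vertex has at least r + s − 1 in-neighbors among the vertices of D_k. Then D_k is (r,s)-robust for every k = 0, 1, …, K. In particular, growing a network by preferential attachment, where each newly attached node receives incoming edges from at least r + s − 1 existing nodes, preserves (r,s)-robustness. -/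
open Finset

section Robustness

variable {V : Type*} [Fintype V] [DecidableEq V] {E : Finset (V × V)} {r s : ℕ}

@[simp]
lemma mem_inNbrs {i j : V} : j ∈ inNbrs E i ↔ (j, i) ∈ E := by
  simp [inNbrs]

lemma card_reachSet_le (S : Finset V) : #(reachSet E r S) ≤ #S :=
  card_filter_le _ _

def RobustPair (E : Finset (V × V)) (r s : ℕ) (S1 S2 : Finset V) : Prop :=
  #(reachSet E r S1) = #S1 ∨ #(reachSet E r S2) = #S2 ∨
    s ≤ #(reachSet E r S1) + #(reachSet E r S2)

lemma RobustPair.symm {S1 S2 : Finset V} (h : RobustPair E r s S1 S2) :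
    RobustPair E r s S2 S1 := by
  unfold RobustPair at h ⊢
  omega

lemma robustPair_empty_left (S : Finset V) : RobustPair E r s ∅ S :=
  Or.inl (by simp [reachSet])

lemma rsRobust_iff_forall_disjoint :
    RSRobust E r s ↔ ∀ S1 S2 : Finset V, Disjoint S1 S2 → RobustPair E r s S1 S2 := by
  refine ⟨fun h S1 S2 hd => ?_, fun h S1 S2 _ _ hd => h S1 S2 hd⟩
  obtain rfl | h1 := S1.eq_empty_or_nonempty
  · exact robustPair_empty_left S2
  obtain rfl | h2 := S2.eq_empty_or_nonempty
  · exact (robustPair_empty_left S1).symm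
  exact h S1 S2 h1 h2 hd

lemma le_card_erase_of_notMem_reachSet {S : Finset V} {v : V} (hloop : (v, v) ∉ E)
    (hdeg : r + s - 1 ≤ #(inNbrs E v)) (hvS : v ∈ S) (hvX : v ∉ reachSet E r S) :
    s ≤ #(S.erase v) := by
  have hout : #(inNbrs E v \ S) < r := by simpa [reachSet, hvS] using hvX
  have hin : inNbrs E v ∩ S ⊆ S.erase v := fun x hx => by
    rw [mem_inter, mem_inNbrs] at hx
    exact mem_erase.mpr ⟨by rintro rfl; exact hloop hx.1, hx.2⟩
  have hsplit := card_sdiff_add_card_inter (inNbrs E v) S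
  have := card_le_card hin
  omega

end Robustness

lemma card_preimage_eq_card_erase {V W : Type*} [DecidableEq W] {f : V → W}
    (hf : Function.Injective f) {v : W} (hrange : ∀ w, (∃ i, f i = w) ↔ w ≠ v) (S : Finset W) :
    #(S.preimage f hf.injOn) = #(S.erase v) := by
  classical
  rw [card_preimage, ← filter_ne']
  exact congrArg card (filter_congr fun w _ => hrange w)

section Extension

variable {V W : Type*} [Fintype V] [DecidableEq V] [Fintype W] [DecidableEq W]
  {E₁ : Finset (V × V)} {E₂ : Finset (W × W)} {f : V → W} {r s : ℕ}

lemma map_mem_reachSet (hf : Function.Injective f)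
    (hE : ∀ i j, (i, j) ∈ E₁ → (f i, f j) ∈ E₂) {S : Finset W} {i : V}
    (hi : i ∈ reachSet E₁ r (S.preimage f hf.injOn)) : f i ∈ reachSet E₂ r S := by
  simp only [reachSet, mem_filter, mem_preimage] at hi ⊢
  refine ⟨hi.1, hi.2.trans (card_le_card_of_injOn f (fun j hj => ?_) hf.injOn)⟩
  simp only [coe_sdiff, Set.mem_sdiff, mem_coe, mem_inNbrs, mem_preimage] at hj ⊢
  exact ⟨hE j i hj.1, hj.2⟩

lemma card_reachSet_preimage_le (hf : Function.Injective f)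
    (hE : ∀ i j, (i, j) ∈ E₁ → (f i, f j) ∈ E₂) (S : Finset W) :
    #(reachSet E₁ r (S.preimage f hf.injOn)) ≤ #(reachSet E₂ r S) :=
  card_le_card_of_injOn f (fun _ hi => map_mem_reachSet hf hE hi) hf.injOn

lemma card_reachSet_preimage_lt (hf : Function.Injective f)
    (hE : ∀ i j, (i, j) ∈ E₁ → (f i, f j) ∈ E₂) {S : Finset W} {v : W}
    (hv : v ∉ Set.range f) (hvX : v ∈ reachSet E₂ r S) :
    #(reachSet E₁ r (S.preimage f hf.injOn)) < #(reachSet E₂ r S) := by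
  have hmaps : Set.MapsTo f (reachSet E₁ r (S.preimage f hf.injOn))
      ((reachSet E₂ r S).erase v) := fun i hi =>
    mem_erase.mpr ⟨fun h => hv ⟨i, h⟩, map_mem_reachSet hf hE hi⟩
  have := card_le_card_of_injOn f hmaps hf.injOn
  rw [card_erase_of_mem hvX] at this
  have := card_pos.mpr ⟨v, hvX⟩
  omega

lemma robustPair_of_preimage (hf : Function.Injective f)
    (hE : ∀ i j, (i, j) ∈ E₁ → (f i, f j) ∈ E₂) {v : W} (hrange : ∀ w, (∃ i, f i = w) ↔ w ≠ v)
    (hloop : (v, v) ∉ E₂) (hdeg : r + s - 1 ≤ #(inNbrs E₂ v)) {S1 S2 : Finset W}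
    (hv2 : v ∉ S2)
    (h : RobustPair E₁ r s (S1.preimage f hf.injOn) (S2.preimage f hf.injOn)) :
    RobustPair E₂ r s S1 S2 := by
  have hvf : v ∉ Set.range f := fun hw => (hrange v).mp hw rfl
  have hc1 := card_preimage_eq_card_erase hf hrange S1
  have hc2 := card_preimage_eq_card_erase hf hrange S2
  rw [erase_eq_of_notMem hv2] at hc2
  have hX1 := card_reachSet_preimage_le (r := r) hf hE S1
  have hX2 := card_reachSet_preimage_le (r := r) hf hE S2
  have hS1 := card_reachSet_le (E := E₂) (r := r) S1
  have hS2 := card_reachSet_le (E := E₂) (r := r) S2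
  unfold RobustPair at h ⊢
  by_cases hv1 : v ∈ S1
  · have hc1_erase := card_erase_of_mem hv1
    by_cases hvX : v ∈ reachSet E₂ r S1
    · have := card_reachSet_preimage_lt hf hE hvf hvX
      omega
    · have := le_card_erase_of_notMem_reachSet hloop hdeg hv1 hvX
      omega
  · rw [erase_eq_of_notMem hv1] at hc1
    omega

lemma RSRobust.of_attachVertex (hf : Function.Injective f)
    (hE : ∀ i j, (i, j) ∈ E₁ → (f i, f j) ∈ E₂) {v : W} (hrange : ∀ w, (∃ i, f i = w) ↔ w ≠ v)
    (hloop : (v, v) ∉ E₂) (hdeg : r + s - 1 ≤ #(inNbrs E₂ v)) (hrob : RSRobust E₁ r s) :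
    RSRobust E₂ r s := by
  rw [rsRobust_iff_forall_disjoint] at hrob ⊢
  intro S1 S2 hd
  by_cases hv2 : v ∈ S2
  · have hv1 : v ∉ S1 := disjoint_right.mp hd hv2
    exact (robustPair_of_preimage hf hE hrange hloop hdeg hv1
      (hrob _ _ (disjoint_preimage hd.symm))).symm
  · exact robustPair_of_preimage hf hE hrange hloop hdeg hv2 (hrob _ _ (disjoint_preimage hd))

end Extension

theorem stmt19_general (n0 r s K : ℕ)
    (E : ∀ k : ℕ, Finset (Fin (n0 + k) × Fin (n0 + k)))
    (hsimple : ∀ k, ∀ i : Fin (n0 + k), (i, i) ∉ E k)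
    (hrob0 : RSRobust (E 0) r s)
    (hrestr : ∀ k, ∀ i j : Fin (n0 + k),
      (Fin.castSucc i, Fin.castSucc j) ∈ E (k + 1) ↔ (i, j) ∈ E k)
    (hdeg : ∀ k, r + s - 1 ≤ (inNbrs (E (k + 1)) (Fin.last (n0 + k))).card) :
    ∀ k ≤ K, RSRobust (E k) r s := by
  suffices h : ∀ k, RSRobust (E k) r s from fun k _ => h k
  intro k
  induction k with
  | zero => exact hrob0
  | succ k ih =>
    exact ih.of_attachVertex (Fin.castSucc_injective _) (fun i j => (hrestr k i j).mpr)
      (fun _ => Fin.exists_castSucc_eq) (hsimple _ _) (hdeg k)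

/-- `(r,s)`-robustness is preserved under repeatedly attaching a new vertex with at least
`r + s - 1` in-neighbors among the existing vertices (e.g. preferential attachment).
Here `E k` is the edge set of the digraph `D_k` on `n0 + k` vertices; `D_{k+1}` agrees
with `D_k` on the old vertices, and the new vertex `Fin.last (n0 + k)` has in-degree at
least `r + s - 1` in `D_{k+1}`. -/
theorem stmt19 (n0 r s K : ℕ) (hn : 2 ≤ n0) (hs1 : 1 ≤ s) (hsn : s ≤ n0)
    (E : ∀ k : ℕ, Finset (Fin (n0 + k) × Fin (n0 + k)))
    (hsimple : ∀ k, ∀ i : Fin (n0 + k), (i, i) ∉ E k)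
    (hrob0 : RSRobust (E 0) r s)
    (hrestr : ∀ k, ∀ i j : Fin (n0 + k),
      (Fin.castSucc i, Fin.castSucc j) ∈ E (k + 1) ↔ (i, j) ∈ E k)
    (hdeg : ∀ k, r + s - 1 ≤ (inNbrs (E (k + 1)) (Fin.last (n0 + k))).card) :
    ∀ k ≤ K, RSRobust (E k) r s :=
  stmt19_general n0 r s K E hsimple hrob0 hrestr hdeg
end
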